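/- arXiv:cs/0610081 — 4 statements merged into one kernel-verified Lean document; each statement's English description precedes it below -/
import Mathlib

section
/- For every precise predicate r over heaps, the operation −*r distributes over intersection: for all predicates p, q, (p ∩ q) * r = (p*r) ∩ (q*r). -/
/-- Locations are positive integers. -/
abbrev Loc := ℕ+

/-- A heap is a finite partial function from locations to integers. -/
abbrev Heap := Finmap (fun _ : Loc => ℤ)

/-- Separating conjunction of predicates over heaps. -/
def sep (p q : Set Heap) : Set Heap :=
  {h | ∃ h1 h2 : Heap, h1.Disjoint h2 ∧ h1 ∈ p ∧ h2 ∈ q ∧ h = h1 ∪ h2}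

/-- The predicate containing only the empty heap. -/
def emp : Set Heap := {∅}

/-- A predicate is precise when every heap has at most one subheap in it. -/
def Precise (r : Set Heap) : Prop :=
  ∀ h h0 h1 : Heap,
    (∃ h0' : Heap, h0.Disjoint h0' ∧ h0 ∪ h0' = h) →
    (∃ h1' : Heap, h1.Disjoint h1' ∧ h1 ∪ h1' = h) →
    h0 ∈ r → h1 ∈ r → h0 = h1


lemma union_cancel_right {a b c : Heap} (hac : a.Disjoint c) (hbc : b.Disjoint c)
    (h : a ∪ c = b ∪ c) : a = b := by
  apply Finmap.ext_lookup
  intro x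
  by_cases hxa : x ∈ a <;> by_cases hxb : x ∈ b
  · have := congrArg (Finmap.lookup x) h
    rwa [Finmap.lookup_union_left hxa, Finmap.lookup_union_left hxb] at this
  · exfalso
    have h' := congrArg (Finmap.lookup x) h
    rw [Finmap.lookup_union_left hxa, Finmap.lookup_union_right hxb] at h'
    have hxc : x ∈ c := by
      rw [← Finmap.lookup_isSome, ← h', Finmap.lookup_isSome]; exact hxa
    exact hac x hxa hxc
  · exfalso
    have h' := congrArg (Finmap.lookup x) h
    rw [Finmap.lookup_union_right hxa, Finmap.lookup_union_left hxb] at h'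
    have hxc : x ∈ c := by
      rw [← Finmap.lookup_isSome, h', Finmap.lookup_isSome]; exact hxb
    exact hbc x hxb hxc
  · rw [Finmap.lookup_eq_none.2 hxa, Finmap.lookup_eq_none.2 hxb]

theorem sep_precise_distrib_inter {r : Set Heap} (hr : Precise r) :
    ∀ p q : Set Heap, sep (p ∩ q) r = sep p r ∩ sep q r := by
  intro p q
  ext h
  constructor
  · rintro ⟨h1, h2, hd, ⟨hp, hq⟩, hrm, rfl⟩
    exact ⟨⟨h1, h2, hd, hp, hrm, rfl⟩, ⟨h1, h2, hd, hq, hrm, rfl⟩⟩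
  · rintro ⟨⟨a, b, hab, hap, hbr, heq1⟩, ⟨c, d, hcd, hcq, hdr, heq2⟩⟩
    have hba : b.Disjoint a := (Finmap.Disjoint.symm _ _ hab)
    have hdc : d.Disjoint c := (Finmap.Disjoint.symm _ _ hcd)
    have hbd : b = d := by
      apply hr h b d
      · exact ⟨a, hba, by rw [Finmap.union_comm_of_disjoint hba, ← heq1]⟩
      · exact ⟨c, hdc, by rw [Finmap.union_comm_of_disjoint hdc, ← heq2]⟩
      · exact hbr
      · exact hdr
    subst hbd
    have hac : a = c := union_cancel_right hab hcd (heq1 ▸ heq2)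
    subst hac
    exact ⟨a, b, hab, ⟨hap, hcq⟩, hbr, heq1⟩
end

section
/- Let con(c,c') be the command defined by: wrong ∈ con(c,c')(h) iff wrong ∈ c(h) ∪ c'(h), and h' ∈ con(c,c')(h) iff h' ∈ c(h) ∩ c'(h). If c and c' both satisfy safety monotonicity and the frame property, then so does con(c,c'). -/
/-- A command maps a heap to a set of outcomes: `none` is `wrong`,
`some h'` is a resulting heap. -/
abbrev Cmd := Heap → Set (Option Heap)

/-- Safety monotonicity. -/
def SafetyMono (c : Cmd) : Prop :=
  ∀ h h0 : Heap, h.Disjoint h0 → none ∉ c h → none ∉ c (h ∪ h0)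

/-- The frame property. -/
def FrameProp (c : Cmd) : Prop :=
  ∀ h h0 h1' : Heap, h.Disjoint h0 → none ∉ c h → some h1' ∈ c (h ∪ h0) →
    ∃ h' : Heap, h'.Disjoint h0 ∧ h1' = h' ∪ h0 ∧ some h' ∈ c h

/-- The conjunction-combining operation on commands. -/
def con (c c' : Cmd) : Cmd := fun h =>
  {o | (o = none ∧ (none ∈ c h ∨ none ∈ c' h)) ∨
       (∃ h' : Heap, o = some h' ∧ some h' ∈ c h ∧ some h' ∈ c' h)}

theorem con_safetyMono_frameProp {c c' : Cmd}
    (hc1 : SafetyMono c) (hc2 : FrameProp c)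
    (hc1' : SafetyMono c') (hc2' : FrameProp c') :
    SafetyMono (con c c') ∧ FrameProp (con c c') := by
  constructor
  · intro h h0 hd hn hmem
    rcases hmem with ⟨_, hor⟩ | ⟨h', heq, _⟩
    · apply hn
      rcases hor with hw | hw
      · exact absurd hw (hc1 h h0 hd (fun hx => hn (Or.inl ⟨rfl, Or.inl hx⟩)))
      · exact absurd hw (hc1' h h0 hd (fun hx => hn (Or.inl ⟨rfl, Or.inr hx⟩)))
    · exact nomatch heq
  · intro h h0 h1' hd hn hmem
    have hnc : none ∉ c h := fun hx => hn (Or.inl ⟨rfl, Or.inl hx⟩)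
    have hnc' : none ∉ c' h := fun hx => hn (Or.inl ⟨rfl, Or.inr hx⟩)
    rcases hmem with ⟨heq, _⟩ | ⟨h1, heq, hm1, hm2⟩
    · exact nomatch heq
    · obtain rfl : h1' = h1 := by injection heq
      obtain ⟨ha, hda, haeq, hac⟩ := hc2 h h0 h1' hd hnc hm1
      obtain ⟨hb, hdb, hbeq, hbc⟩ := hc2' h h0 h1' hd hnc' hm2
      have : ha = hb := Finmap.union_cancel hda hdb |>.mp (haeq ▸ hbeq)
      subst this
      exact ⟨ha, hda, haeq, Or.inr ⟨ha, rfl, hac, hbc⟩⟩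
end

section
/- Sequential composition preserves safety monotonicity and the frame property: if commands c and c' satisfy safety monotonicity and the frame property, then so does seq(c,c'), defined by seq(c,c')(h) = { wrong | wrong ∈ c(h) } ∪ ⋃{ c'(h') | h' ∈ c(h), h' a heap }. -/
/-- Sequential composition of commands. -/
def seq (c c' : Cmd) : Cmd := fun h =>
  {o | (o = none ∧ none ∈ c h) ∨ ∃ h' : Heap, some h' ∈ c h ∧ o ∈ c' h'}

theorem seq_safetyMono_frameProp {c c' : Cmd}
    (hc1 : SafetyMono c) (hc2 : FrameProp c)
    (hc1' : SafetyMono c') (hc2' : FrameProp c') :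
    SafetyMono (seq c c') ∧ FrameProp (seq c c') := by
  have hcnone : ∀ h : Heap, none ∉ seq c c' h →
      none ∉ c h ∧ ∀ h' : Heap, some h' ∈ c h → none ∉ c' h' := by
    intro h hn
    constructor
    · intro hc; exact hn (Or.inl ⟨rfl, hc⟩)
    · intro h' hh' hc'; exact hn (Or.inr ⟨h', hh', hc'⟩)
  constructor
  · intro h h0 hd hn hw
    obtain ⟨hn1, hn2⟩ := hcnone h hn
    rcases hw with ⟨_, hw⟩ | ⟨h1, hh1, hw⟩
    · exact hc1 h h0 hd hn1 hw
    · obtain ⟨h', hd', rfl, hh'⟩ := hc2 h h0 h1 hd hn1 hh1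
      exact hc1' h' h0 hd' (hn2 h' hh') hw
  · intro h h0 h1' hd hn hmem
    obtain ⟨hn1, hn2⟩ := hcnone h hn
    rcases hmem with ⟨hbad, _⟩ | ⟨h1, hh1, hmem⟩
    · exact absurd hbad (by simp)
    · obtain ⟨h', hd', rfl, hh'⟩ := hc2 h h0 h1 hd hn1 hh1
      obtain ⟨h'', hd'', rfl, hh''⟩ :=
        hc2' h' h0 h1' hd' (hn2 h' hh') hmem
      exact ⟨h'', hd'', rfl, Or.inr ⟨h', hh', hh''⟩⟩
end

section
/- The free command satisfies its triple with any frame: for every location m and every predicate r, the command free(m), defined by free(m)(h) = { h restricted away from m } if m ∈ dom(h) and {wrong} otherwise, satisfies {(m↦−)*r}{emp*r}, i.e., for every h ∈ (m↦−)*r, wrong ∉ free(m)(h) and free(m)(h) ⊆ emp*r. -/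
/-- A command `c` satisfies the Hoare triple `{p}{q}`. -/
def Triple (p : Set Heap) (c : Cmd) (q : Set Heap) : Prop :=
  ∀ h ∈ p, none ∉ c h ∧ ∀ h' : Heap, some h' ∈ c h → h' ∈ q

/-- The predicate `m ↦ -` of singleton heaps with domain `{m}`. -/
def mapsAny (m : Loc) : Set Heap := {h | ∃ n : ℤ, h = Finmap.singleton m n}

/-- The free command. -/
def free (m : Loc) : Cmd := fun h =>
  if m ∈ h then {some (h.erase m)} else {none}

theorem free_triple (m : Loc) (r : Set Heap) :
    Triple (sep (mapsAny m) r) (free m) (sep emp r) := by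
  rintro h ⟨h1, h2, hd, ⟨n, rfl⟩, hr, rfl⟩
  have hm : m ∈ Finmap.singleton m n ∪ h2 := by
    simp [Finmap.mem_union]
  have hd2 : m ∉ h2 := hd m (by simp)
  have herase : (Finmap.singleton m n ∪ h2).erase m = h2 := by
    apply Finmap.ext_lookup; intro x
    by_cases hx : x = m
    · subst hx; simp [Finmap.lookup_erase, Finmap.lookup_eq_none.2 hd2]
    · rw [Finmap.lookup_erase_ne hx, Finmap.lookup_union_right (by simp [hx])]
  constructor
  · simp [free, hm]
  · intro h' hh'
    simp only [free, hm, if_pos, Set.mem_singleton_iff, Option.some.injEq] at hh'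
    subst hh'
    exact ⟨∅, h2, Finmap.disjoint_empty h2, rfl, hr, by rw [herase, Finmap.empty_union]⟩
end
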